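/- arXiv:1111.5799 — 6 statements merged into one kernel-verified Lean document; each statement's English description precedes it below -/
import Mathlib

section
/- Assume λ_e > P, B > P, and that there exists r* < 0 with E[exp(r*·(Z_1 − P))] = 1. Then 1 − exp(r*·(B − P)) ≤ liminf_{n→∞} (1/n)·Σ_{t=1}^n Pr(S_t ≥ P) ≤ 1. -/
open MeasureTheory ProbabilityTheory Filter Finset
open Topology

/-- The Lindley-type dominating walk. -/
def tpfM (c : ℕ → ℝ) : ℕ → ℝ
  | 0 => 0
  | (t+1) => max (tpfM c t + c (t+1)) 0

lemma tpfM_dom (z s : ℕ → ℝ) (P B : ℝ) (hP : 0 ≤ P) (hs0 : s 0 = 0)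
    (hstep : ∀ t, s (t+1) = min (s t + z (t+1) - (if P ≤ s t then P else 0)) B) :
    ∀ t, B - s t ≤ max (B + ∑ i ∈ Icc 1 t, (P - z i)) (tpfM (fun i => P - z i) t) := by
  intro t
  induction t with
  | zero => simp [hs0, tpfM]
  | succ t ih =>
      have hite : (if P ≤ s t then P else 0) ≤ P := by split <;> linarith
      have h1 : B - s (t+1) ≤ max (B - s t + (P - z (t+1))) 0 := by
        rw [hstep t]
        rcases le_total (s t + z (t+1) - (if P ≤ s t then P else 0)) B with h | h
        · rw [min_eq_left h]
          exact le_max_of_le_left (by linarith)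
        · rw [min_eq_right h]
          exact le_max_of_le_right (by linarith)
      refine h1.trans (max_le ?_ (le_max_of_le_right (le_max_right _ _)))
      rcases max_cases (B + ∑ i ∈ Icc 1 t, (P - z i)) (tpfM (fun i => P - z i) t) with
        ⟨heq, _⟩ | ⟨heq, _⟩ <;> rw [heq] at ih
      · refine le_max_of_le_left ?_
        rw [Finset.sum_Icc_succ_top (by omega : 1 ≤ t + 1)]
        linarith
      · refine le_max_of_le_right ?_
        show _ ≤ max (tpfM (fun i => P - z i) t + (P - z (t+1))) 0
        exact le_max_of_le_left (by linarith)

lemma tpfM_exists (c : ℕ → ℝ) : ∀ t b, b < tpfM c t → 0 < tpfM c t →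
    ∃ j, 1 ≤ j ∧ j ≤ t ∧ b < ∑ i ∈ Icc j t, c i := by
  intro t
  induction t with
  | zero => intro b _ h0; simp [tpfM] at h0
  | succ t ih =>
      intro b hb h0
      have hmax : tpfM c (t+1) = max (tpfM c t + c (t+1)) 0 := rfl
      rw [hmax] at hb h0
      have hpos : 0 < tpfM c t + c (t+1) := by
        rcases lt_or_ge 0 (tpfM c t + c (t+1)) with h | h
        · exact h
        · simp [max_eq_right h] at h0
      have hb' : b < tpfM c t + c (t+1) := by
        rwa [max_eq_left hpos.le] at hb
      rcases le_or_gt (tpfM c t) 0 with h | h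
      · refine ⟨t+1, by omega, le_refl _, ?_⟩
        rw [Finset.Icc_self, Finset.sum_singleton]
        nlinarith
      · obtain ⟨j, hj1, hjt, hsum⟩ := ih (b - c (t+1)) (by linarith) h
        refine ⟨j, hj1, by omega, ?_⟩
        rw [Finset.sum_Icc_succ_top (by omega : j ≤ t + 1)]
        linarith

lemma tpf_prod_integral {Ω : Type*} [MeasurableSpace Ω] (μ : Measure Ω) [IsProbabilityMeasure μ]
    (g : ℕ → Ω → ℝ) (hg : ∀ i, Measurable (g i)) (hpos : ∀ i ω, 0 ≤ g i ω)
    (hind : iIndepFun g μ) (s : Finset ℕ) :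
    ∫ ω, ∏ i ∈ s, g i ω ∂μ = ∏ i ∈ s, ∫ ω, g i ω ∂μ := by
  classical
  induction s using Finset.induction_on with
  | empty => simp
  | @insert a s' ha ih =>
      have hIF : IndepFun (∏ j ∈ s', g j) (g a) μ :=
        hind.indepFun_finsetProd_of_notMem hg ha
      have hprodmeas : Measurable (∏ j ∈ s', g j) := by
        rw [show (∏ j ∈ s', g j) = fun ω => ∏ j ∈ s', g j ω from funext fun ω => by
          simp [Finset.prod_apply]]
        exact Finset.measurable_prod _ fun i _ => hg i
      have key := hIF.integral_mul_eq_mul_integral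
        hprodmeas.aestronglyMeasurable (hg a).aestronglyMeasurable
      calc ∫ ω, ∏ i ∈ insert a s', g i ω ∂μ
          = ∫ ω, ((∏ j ∈ s', g j) * g a) ω ∂μ := by
            congr 1; funext ω
            simp [Finset.prod_insert ha, Finset.prod_apply, mul_comm]
        _ = (∫ ω, (∏ j ∈ s', g j) ω ∂μ) * ∫ ω, g a ω ∂μ := key
        _ = (∏ i ∈ s', ∫ ω, g i ω ∂μ) * ∫ ω, g a ω ∂μ := by
            rw [show (fun ω => (∏ j ∈ s', g j) ω) = fun ω => ∏ j ∈ s', g j ω from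
              funext fun ω => by simp [Finset.prod_apply], ih]
        _ = ∏ i ∈ insert a s', ∫ ω, g i ω ∂μ := by rw [Finset.prod_insert ha]; ring

lemma tpf_indep_block {Ω : Type*} [MeasurableSpace Ω] {μ : Measure Ω}
    (Z : ℕ → Ω → ℝ) (hmeas : ∀ t, Measurable (Z t))
    (hindep : iIndepFun Z μ)
    (P B rstar : ℝ) (j t : ℕ) (hj : 1 ≤ j) :
    IndepFun
      (Set.indicator ({ω | B - P < ∑ i ∈ Icc j t, (P - Z i ω)} ∩
          ⋂ k ∈ Icc (j+1) t, {ω | B - P < ∑ i ∈ Icc k t, (P - Z i ω)}ᶜ)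
        (fun ω => ∏ i ∈ Icc j t, Real.exp (rstar * (Z i ω - P))))
      (fun ω => ∏ i ∈ Icc 1 (j-1), Real.exp (rstar * (Z i ω - P))) μ := by
  classical
  set S₁ : Finset ℕ := Icc j t with hS₁
  set S₂ : Finset ℕ := Icc 1 (j-1) with hS₂
  have hdisj : Disjoint S₁ S₂ := by
    rw [Finset.disjoint_left]
    intro a haS1 haS2
    rw [hS₁, Finset.mem_Icc] at haS1
    rw [hS₂, Finset.mem_Icc] at haS2
    omega
  have base := hindep.indepFun_finset S₁ S₂ hdisj hmeas
  set σ : ℕ → ((i : S₁) → ℝ) → ℝ :=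
    fun k x => ∑ i ∈ S₁.attach, if k ≤ (i : ℕ) then (P - x i) else 0 with hσdef
  have hσmeas : ∀ k, Measurable (σ k) := by
    intro k
    apply Finset.measurable_sum
    intro i _
    by_cases h : k ≤ (i : ℕ)
    · simp only [if_pos h]
      exact measurable_const.sub (measurable_pi_apply i)
    · simp only [if_neg h]
      exact measurable_const
  have hσ : ∀ k, j ≤ k → ∀ ω, σ k (fun i : S₁ => Z i ω) = ∑ i ∈ Icc k t, (P - Z i ω) := by
    intro k hk ω
    rw [hσdef]
    simp only
    rw [Finset.sum_attach S₁ (fun n => if k ≤ n then (P - Z n ω) else 0)]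
    rw [← Finset.sum_filter]
    congr 1
    ext i
    simp only [Finset.mem_filter, hS₁, Finset.mem_Icc]
    omega
  set setL : Set ((i : S₁) → ℝ) :=
    {x | B - P < σ j x} ∩ ⋂ k ∈ Icc (j+1) t, {x | B - P < σ k x}ᶜ with hsetL
  have hsetLmeas : MeasurableSet setL := by
    refine ((measurableSet_lt measurable_const (hσmeas j)).inter ?_)
    refine MeasurableSet.biInter (Set.to_countable _) fun k _ => ?_
    exact (measurableSet_lt measurable_const (hσmeas k)).compl
  set φ : ((i : S₁) → ℝ) → ℝ :=
    Set.indicator setL (fun x => ∏ i ∈ S₁.attach, Real.exp (rstar * (x i - P))) with hφ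
  have hφmeas : Measurable φ :=
    (Finset.measurable_prod _ fun i _ => by fun_prop).indicator
      hsetLmeas
  set ψ : ((i : S₂) → ℝ) → ℝ :=
    fun x => ∏ i ∈ S₂.attach, Real.exp (rstar * (x i - P)) with hψ
  have hψmeas : Measurable ψ :=
    Finset.measurable_prod _ fun i _ => by fun_prop
  have res := base.comp hφmeas hψmeas
  have hmem : ∀ ω, ((fun i : S₁ => Z i ω) ∈ setL ↔
      ω ∈ ({ω | B - P < ∑ i ∈ Icc j t, (P - Z i ω)} ∩
        ⋂ k ∈ Icc (j+1) t, {ω | B - P < ∑ i ∈ Icc k t, (P - Z i ω)}ᶜ)) := by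
    intro ω
    rw [hsetL]
    simp only [Set.mem_inter_iff, Set.mem_setOf_eq, Set.mem_iInter, Set.mem_compl_iff,
      Finset.mem_Icc]
    rw [hσ j le_rfl ω]
    refine and_congr Iff.rfl ?_
    constructor
    · intro h k hk
      have := h k hk
      rwa [hσ k (by omega) ω] at this
    · intro h k hk
      rw [hσ k (by omega) ω]
      exact h k hk
  have heq1 : (φ ∘ fun ω (i : S₁) => Z i ω) =
      Set.indicator ({ω | B - P < ∑ i ∈ Icc j t, (P - Z i ω)} ∩
          ⋂ k ∈ Icc (j+1) t, {ω | B - P < ∑ i ∈ Icc k t, (P - Z i ω)}ᶜ)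
        (fun ω => ∏ i ∈ Icc j t, Real.exp (rstar * (Z i ω - P))) := by
    funext ω
    simp only [Function.comp_apply, hφ, Set.indicator_apply]
    refine if_congr (hmem ω) ?_ rfl
    rw [Finset.prod_attach S₁ (fun n => Real.exp (rstar * (Z n ω - P)))]
  have heq2 : (ψ ∘ fun ω (i : S₂) => Z i ω) =
      fun ω => ∏ i ∈ Icc 1 (j-1), Real.exp (rstar * (Z i ω - P)) := by
    funext ω
    simp only [Function.comp_apply, hψ]
    rw [Finset.prod_attach S₂ (fun n => Real.exp (rstar * (Z n ω - P)))]
  rw [heq1, heq2] at res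
  exact res

lemma tpf_int_bdd {Ω : Type*} [MeasurableSpace Ω] {μ : Measure Ω} [IsFiniteMeasure μ]
    {f : Ω → ℝ} (hm : Measurable f) (h0 : ∀ ω, 0 ≤ f ω) {C : ℝ} (hC : ∀ ω, f ω ≤ C) :
    Integrable f μ :=
  (integrable_const C).mono' hm.aestronglyMeasurable
    (ae_of_all _ fun ω => by rw [Real.norm_eq_abs, abs_of_nonneg (h0 ω)]; exact hC ω)

section Core
variable {Ω : Type*} [MeasurableSpace Ω] (μ : Measure Ω) [IsProbabilityMeasure μ]

lemma tpf_core (Z : ℕ → Ω → ℝ) (hmeas : ∀ t, Measurable (Z t))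
    (hindep : iIndepFun Z μ)
    (hident : ∀ i j, 1 ≤ i → 1 ≤ j → IdentDistrib (Z i) (Z j) μ μ)
    (hnonneg : ∀ t ω, 0 ≤ Z t ω)
    (P B rstar : ℝ) (hP : 0 < P) (hB : P < B) (hrstar : rstar < 0)
    (hroot : ∫ ω, Real.exp (rstar * (Z 1 ω - P)) ∂μ = 1) (t : ℕ) :
    (μ (⋃ j ∈ (Icc 1 t : Finset ℕ), {ω | B - P < ∑ i ∈ Icc j t, (P - Z i ω)})).toReal
      ≤ Real.exp (rstar * (B - P)) := by
  classical
  set g : ℕ → Ω → ℝ := fun i ω => Real.exp (rstar * (Z i ω - P)) with hg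
  have hgmeas : ∀ i, Measurable (g i) :=
    fun i => Real.measurable_exp.comp (((hmeas i).sub_const P).const_mul rstar)
  have hgpos : ∀ i ω, 0 ≤ g i ω := fun i ω => (Real.exp_pos _).le
  have hgbound : ∀ i ω, g i ω ≤ Real.exp (-(rstar * P)) := by
    intro i ω
    apply Real.exp_le_exp.2
    nlinarith [hnonneg i ω]
  have hgind : iIndepFun g μ :=
    hindep.comp (fun _ x => Real.exp (rstar * (x - P)))
      (fun _ => Real.measurable_exp.comp ((measurable_id.sub_const P).const_mul rstar))
  have hgone : ∀ i, 1 ≤ i → ∫ ω, g i ω ∂μ = 1 := by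
    intro i hi
    have hid : IdentDistrib (g i) (g 1) μ μ :=
      (hident i 1 hi le_rfl).comp
        (Real.measurable_exp.comp ((measurable_id.sub_const P).const_mul rstar))
    rw [hid.integral_eq]
    exact hroot
  have hprodone : ∀ a b : ℕ, 1 ≤ a → ∫ ω, ∏ i ∈ Icc a b, g i ω ∂μ = 1 := by
    intro a b ha
    rw [tpf_prod_integral μ g hgmeas hgpos hgind]
    exact Finset.prod_eq_one fun i hi => hgone i (by have := (Finset.mem_Icc.1 hi).1; omega)
  have hprodint : ∀ (s : Finset ℕ), Integrable (fun ω => ∏ i ∈ s, g i ω) μ := by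
    intro s
    refine tpf_int_bdd (Finset.measurable_prod _ fun i _ => hgmeas i)
      (fun ω => Finset.prod_nonneg fun i _ => hgpos i ω)
      (C := Real.exp (-(rstar * P)) ^ s.card) (fun ω => ?_)
    calc ∏ i ∈ s, g i ω ≤ ∏ _i ∈ s, Real.exp (-(rstar * P)) :=
          Finset.prod_le_prod (fun i _ => hgpos i ω) (fun i _ => hgbound i ω)
      _ = Real.exp (-(rstar * P)) ^ s.card := Finset.prod_const _
  set D : ℕ → Set Ω := fun j => {ω | B - P < ∑ i ∈ Icc j t, (P - Z i ω)} with hD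
  have hDmeas : ∀ j, MeasurableSet (D j) :=
    fun j => measurableSet_lt measurable_const (Finset.measurable_sum _ fun i _ =>
      measurable_const.sub (hmeas i))
  set F : ℕ → Set Ω := fun j => D j ∩ ⋂ k ∈ Icc (j+1) t, (D k)ᶜ with hF
  have hFmeas : ∀ j, MeasurableSet (F j) := fun j =>
    (hDmeas j).inter (MeasurableSet.biInter (Set.to_countable _) fun k _ => (hDmeas k).compl)
  have hFD : ∀ j, F j ⊆ D j := fun j => Set.inter_subset_left
  have hUnion : (⋃ j ∈ (Icc 1 t : Finset ℕ), D j) ⊆ ⋃ j ∈ (Icc 1 t : Finset ℕ), F j := by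
    intro ω hω
    simp only [Set.mem_iUnion, Finset.mem_Icc, exists_prop] at hω ⊢
    obtain ⟨j₀, ⟨hj₀1, hj₀t⟩, hωD⟩ := hω
    set js := Nat.findGreatest (fun j => ω ∈ D j) t with hjs
    have hle : j₀ ≤ js := Nat.le_findGreatest (P := fun j => ω ∈ D j) hj₀t hωD
    have hspec : ω ∈ D js := Nat.findGreatest_spec (P := fun j => ω ∈ D j) hj₀t hωD
    refine ⟨js, ⟨by omega, Nat.findGreatest_le t⟩, hspec, ?_⟩
    simp only [Set.mem_iInter, Set.mem_compl_iff, Finset.mem_Icc]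
    intro k hk
    exact Nat.findGreatest_is_greatest (P := fun j => ω ∈ D j) (by omega) hk.2
  have hdisjF : (↑(Icc 1 t : Finset ℕ) : Set ℕ).Pairwise (Function.onFun Disjoint F) := by
    intro a ha b hb hab
    simp only [Finset.coe_Icc, Set.mem_Icc] at ha hb
    have key : ∀ a b : ℕ, 1 ≤ a → b ≤ t → a < b → Disjoint (F a) (F b) := by
      intro a b _ hbt hab'
      rw [Set.disjoint_left]
      intro ω hωa hωb
      have h1 : ω ∉ D b := by
        have := hωa.2
        simp only [Set.mem_iInter, Set.mem_compl_iff, Finset.mem_Icc] at this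
        exact this b ⟨by omega, hbt⟩
      exact h1 (hFD b hωb)
    rcases lt_or_gt_of_ne hab with h | h
    · exact key a b ha.1 hb.2 h
    · exact (key b a hb.1 ha.2 h).symm
  -- the exponential lower bound on F j
  set eS : ℝ := Real.exp (-rstar * (B - P)) with heS
  have heSpos : 0 < eS := Real.exp_pos _
  have hlow : ∀ j, ∀ ω ∈ F j, eS ≤ ∏ i ∈ Icc j t, g i ω := by
    intro j ω hω
    have hT : B - P < ∑ i ∈ Icc j t, (P - Z i ω) := hFD j hω
    have : (∏ i ∈ Icc j t, g i ω) = Real.exp (∑ i ∈ Icc j t, rstar * (Z i ω - P)) := by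
      rw [Real.exp_sum]
    rw [this, heS]
    apply Real.exp_le_exp.2
    have : ∑ i ∈ Icc j t, rstar * (Z i ω - P) = -rstar * ∑ i ∈ Icc j t, (P - Z i ω) := by
      rw [Finset.mul_sum]
      exact Finset.sum_congr rfl fun i _ => by ring
    rw [this]
    nlinarith
  -- main chain
  have hchain : ∀ j ∈ (Icc 1 t : Finset ℕ),
      eS * (μ (F j)).toReal ≤ ∫ ω in F j, ∏ i ∈ Icc 1 t, g i ω ∂μ := by
    intro j hj
    have hj1 : 1 ≤ j := (Finset.mem_Icc.1 hj).1
    have hjt : j ≤ t := (Finset.mem_Icc.1 hj).2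
    have step1 : eS * (μ (F j)).toReal ≤ ∫ ω in F j, ∏ i ∈ Icc j t, g i ω ∂μ :=
      setIntegral_ge_of_const_le_real (hFmeas j) (measure_ne_top μ _) (hlow j)
        ((hprodint (Icc j t)).integrableOn)
    refine step1.trans (le_of_eq ?_)
    -- ∫_{F j} tail = ∫_{F j} full product, via independence
    have hIF := tpf_indep_block Z hmeas hindep P B rstar j t hj1
    have hXmeas : Measurable (Set.indicator (F j) (fun ω => ∏ i ∈ Icc j t, g i ω)) :=
      (Finset.measurable_prod _ fun i _ => hgmeas i).indicator (hFmeas j)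
    have hmul := hIF.integral_mul_eq_mul_integral
      hXmeas.aestronglyMeasurable
      (Finset.measurable_prod _ fun i _ => hgmeas i).aestronglyMeasurable
    have hheadone : ∫ ω, ∏ i ∈ Icc 1 (j-1), g i ω ∂μ = 1 := hprodone 1 (j-1) le_rfl
    have hsplit : ∀ ω, Set.indicator (F j) (fun ω => ∏ i ∈ Icc j t, g i ω) ω *
        (∏ i ∈ Icc 1 (j-1), g i ω) = Set.indicator (F j) (fun ω => ∏ i ∈ Icc 1 t, g i ω) ω := by
      intro ω
      by_cases hω : ω ∈ F j
      · rw [Set.indicator_of_mem hω, Set.indicator_of_mem hω]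
        rw [← Finset.prod_union (by
          rw [Finset.disjoint_left]
          intro a h1 h2
          rw [Finset.mem_Icc] at h1 h2
          omega)]
        congr 1
        ext i
        simp only [Finset.mem_union, Finset.mem_Icc]
        omega
      · rw [Set.indicator_of_notMem hω, Set.indicator_of_notMem hω, zero_mul]
    calc ∫ ω in F j, ∏ i ∈ Icc j t, g i ω ∂μ
        = ∫ ω, Set.indicator (F j) (fun ω => ∏ i ∈ Icc j t, g i ω) ω ∂μ :=
          (integral_indicator (hFmeas j)).symm
      _ = (∫ ω, Set.indicator (F j) (fun ω => ∏ i ∈ Icc j t, g i ω) ω ∂μ) *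
            ∫ ω, ∏ i ∈ Icc 1 (j-1), g i ω ∂μ := by rw [hheadone, mul_one]
      _ = ∫ ω, Set.indicator (F j) (fun ω => ∏ i ∈ Icc j t, g i ω) ω *
            (∏ i ∈ Icc 1 (j-1), g i ω) ∂μ := hmul.symm
      _ = ∫ ω, Set.indicator (F j) (fun ω => ∏ i ∈ Icc 1 t, g i ω) ω ∂μ := by
          congr 1; funext ω; exact hsplit ω
      _ = ∫ ω in F j, ∏ i ∈ Icc 1 t, g i ω ∂μ := integral_indicator (hFmeas j)
  -- sum up
  have hsum : ∑ j ∈ Icc 1 t, ∫ ω in F j, ∏ i ∈ Icc 1 t, g i ω ∂μ ≤ 1 := by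
    rw [← integral_biUnion_finset (Icc 1 t) (fun j _ => hFmeas j) hdisjF
      (fun j _ => (hprodint (Icc 1 t)).integrableOn)]
    calc ∫ ω in ⋃ j ∈ (Icc 1 t : Finset ℕ), F j, ∏ i ∈ Icc 1 t, g i ω ∂μ
        ≤ ∫ ω, ∏ i ∈ Icc 1 t, g i ω ∂μ :=
          setIntegral_le_integral (hprodint (Icc 1 t))
            (ae_of_all _ fun ω => Finset.prod_nonneg fun i _ => hgpos i ω)
      _ = 1 := hprodone 1 t le_rfl
  have hmeasU : (μ (⋃ j ∈ (Icc 1 t : Finset ℕ), D j)).toReal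
      ≤ ∑ j ∈ Icc 1 t, (μ (F j)).toReal := by
    have h1 : μ (⋃ j ∈ (Icc 1 t : Finset ℕ), D j) ≤ μ (⋃ j ∈ (Icc 1 t : Finset ℕ), F j) :=
      measure_mono hUnion
    have h2 : μ (⋃ j ∈ (Icc 1 t : Finset ℕ), F j) = ∑ j ∈ Icc 1 t, μ (F j) :=
      measure_biUnion_finset hdisjF fun j _ => hFmeas j
    calc (μ (⋃ j ∈ (Icc 1 t : Finset ℕ), D j)).toReal
        ≤ (μ (⋃ j ∈ (Icc 1 t : Finset ℕ), F j)).toReal :=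
          ENNReal.toReal_mono (measure_ne_top μ _) h1
      _ = ∑ j ∈ Icc 1 t, (μ (F j)).toReal := by
          rw [h2, ENNReal.toReal_sum fun j _ => measure_ne_top μ _]
  have hfinal : eS * (μ (⋃ j ∈ (Icc 1 t : Finset ℕ), D j)).toReal ≤ 1 := by
    calc eS * (μ (⋃ j ∈ (Icc 1 t : Finset ℕ), D j)).toReal
        ≤ eS * ∑ j ∈ Icc 1 t, (μ (F j)).toReal := by
          exact mul_le_mul_of_nonneg_left hmeasU heSpos.le
      _ = ∑ j ∈ Icc 1 t, eS * (μ (F j)).toReal := Finset.mul_sum _ _ _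
      _ ≤ ∑ j ∈ Icc 1 t, ∫ ω in F j, ∏ i ∈ Icc 1 t, g i ω ∂μ :=
          Finset.sum_le_sum hchain
      _ ≤ 1 := hsum
  have hexp : Real.exp (rstar * (B - P)) = 1 / eS := by
    rw [heS, show -rstar * (B - P) = -(rstar * (B - P)) by ring, Real.exp_neg, one_div, inv_inv]
  rw [hexp]
  refine (le_div_iff₀ heSpos).2 ?_
  rw [mul_comm]
  exact hfinal

end Core

lemma tpf_lln {Ω : Type*} [MeasurableSpace Ω] (μ : Measure Ω) [IsProbabilityMeasure μ]
    (Z : ℕ → Ω → ℝ) (hmeas : ∀ t, Measurable (Z t))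
    (hindep : iIndepFun Z μ)
    (hident : ∀ i j, 1 ≤ i → 1 ≤ j → IdentDistrib (Z i) (Z j) μ μ)
    (hZint : Integrable (Z 1) μ)
    (lamE P : ℝ) (hlamE : lamE = ∫ ω, Z 1 ω ∂μ) (hP : 0 < P) (hgt : P < lamE) :
    Tendsto (fun t : ℕ => (μ {ω | -P < ∑ i ∈ Icc 1 t, (P - Z i ω)}).toReal)
      atTop (𝓝 0) := by
  classical
  set A : ℕ → Set Ω := fun t => {ω | -P < ∑ i ∈ Icc 1 t, (P - Z i ω)} with hA
  have hAmeas : ∀ t, MeasurableSet (A t) :=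
    fun t => measurableSet_lt measurable_const
      (Finset.measurable_sum _ fun i _ => measurable_const.sub (hmeas i))
  have hslln := strong_law_ae_real (fun i => Z (i+1)) hZint
    (fun i j hij => hindep.indepFun (by omega))
    (fun i => hident (i+1) 1 (by omega) le_rfl)
  have hlim : ∀ᵐ ω ∂μ, Tendsto (fun t : ℕ => Set.indicator (A t) (fun _ => (1:ℝ)) ω)
      atTop (𝓝 0) := by
    filter_upwards [hslln] with ω hω
    set m := (lamE + P) / 2 with hm
    have hm1 : P < m := by rw [hm]; linarith
    have hm2 : m < lamE := by rw [hm]; linarith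
    have hω' : Tendsto (fun n : ℕ => (∑ i ∈ range n, Z (i+1) ω) / n) atTop (𝓝 lamE) := by
      have : lamE = ∫ x, Z (0 + 1) x ∂μ := by rw [hlamE]
      rw [this]
      exact hω
    have ev1 : ∀ᶠ n : ℕ in atTop, m < (∑ i ∈ range n, Z (i+1) ω) / n :=
      hω'.eventually_const_lt hm2
    have ev2 : ∀ᶠ n : ℕ in atTop, P / (m - P) ≤ (n : ℝ) :=
      tendsto_natCast_atTop_atTop.eventually_ge_atTop _
    have ev3 : ∀ᶠ n : ℕ in atTop, 1 ≤ n := eventually_ge_atTop 1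
    have hzero : ∀ᶠ t : ℕ in atTop, Set.indicator (A t) (fun _ => (1:ℝ)) ω = 0 := by
      filter_upwards [ev1, ev2, ev3] with t h1 h2 h3
      rw [Set.indicator_of_notMem]
      rw [hA, Set.mem_setOf_eq, not_lt]
      have htpos : (0:ℝ) < t := by exact_mod_cast h3
      have hsum : ∑ i ∈ Icc 1 t, Z i ω = ∑ i ∈ range t, Z (i+1) ω := by
        rw [show Icc 1 t = Ico 1 (t+1) from by rw [Finset.Ico_add_one_right_eq_Icc],
          Finset.sum_Ico_eq_sum_range]
        simp [add_comm]
      have hS : t * m < ∑ i ∈ range t, Z (i+1) ω := by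
        rw [lt_div_iff₀ htpos] at h1
        linarith
      have hsplit : ∑ i ∈ Icc 1 t, (P - Z i ω) = t * P - ∑ i ∈ Icc 1 t, Z i ω := by
        rw [Finset.sum_sub_distrib, Finset.sum_const, Nat.card_Icc]
        simp [nsmul_eq_mul]
      have hPle : P ≤ t * (m - P) := by
        rw [div_le_iff₀ (by linarith : (0:ℝ) < m - P)] at h2
        linarith [h2]
      rw [hsplit, hsum]
      nlinarith
    exact Tendsto.congr' (by filter_upwards [hzero] with t ht; exact ht.symm) tendsto_const_nhds
  have heq : ∀ t : ℕ, (μ (A t)).toReal = ∫ ω, Set.indicator (A t) (fun _ => (1:ℝ)) ω ∂μ := by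
    intro t
    rw [integral_indicator_const (1:ℝ) (hAmeas t)]
    simp; rfl
  have hdom := tendsto_integral_of_dominated_convergence (μ := μ)
    (F := fun t => Set.indicator (A t) (fun _ => (1:ℝ))) (f := fun _ => (0:ℝ))
    (bound := fun _ => (1:ℝ))
    (fun t => ((measurable_const.indicator (hAmeas t)).aestronglyMeasurable))
    (integrable_const 1)
    (fun t => ae_of_all _ fun ω => by
      by_cases h : ω ∈ A t
      · simp [Set.indicator_of_mem h]
      · simp [Set.indicator_of_notMem h])
    hlim
  simp only [integral_zero] at hdom
  exact Tendsto.congr (fun t => (heq t).symm) hdom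

/-- Bounds on the transmission probability with finite battery capacity, case
`λe > P`: with `r* < 0` a negative root of the cumulant generating function of
`Z 1 - P` and `B > P`, the long-run average of `Pr(S t ≥ P)` satisfies
`1 - exp(r*(B - P)) ≤ liminf ≤ 1`. -/
theorem transmission_probability_finite_battery_high_rate
    {Ω : Type*} [MeasurableSpace Ω] (μ : Measure Ω) [IsProbabilityMeasure μ]
    (Z : ℕ → Ω → ℝ)
    (hmeas : ∀ t, Measurable (Z t))
    (hindep : iIndepFun Z μ)
    (hident : ∀ i j, 1 ≤ i → 1 ≤ j → IdentDistrib (Z i) (Z j) μ μ)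
    (hnonneg : ∀ t ω, 0 ≤ Z t ω)
    (hZint : Integrable (Z 1) μ)
    (lamE P B : ℝ) (hlamE : lamE = ∫ ω, Z 1 ω ∂μ) (hP : 0 < P) (hB : P < B)
    (hgt : P < lamE)
    (S : ℕ → Ω → ℝ)
    (hS0 : ∀ ω, S 0 ω = 0)
    (hS : ∀ t ω, S (t + 1) ω =
      min (S t ω + Z (t + 1) ω - (if P ≤ S t ω then P else 0)) B)
    (rstar : ℝ) (hrstar : rstar < 0)
    (hint : Integrable (fun ω => Real.exp (rstar * (Z 1 ω - P))) μ)
    (hroot : ∫ ω, Real.exp (rstar * (Z 1 ω - P)) ∂μ = 1) :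
    1 - Real.exp (rstar * (B - P))
      ≤ Filter.liminf
          (fun n : ℕ => (1 / (n : ℝ)) * ∑ t ∈ Finset.Icc 1 n, (μ {ω | P ≤ S t ω}).toReal)
          Filter.atTop ∧
    Filter.liminf
      (fun n : ℕ => (1 / (n : ℝ)) * ∑ t ∈ Finset.Icc 1 n, (μ {ω | P ≤ S t ω}).toReal)
      Filter.atTop ≤ 1 := by
  classical
  set κ : ℝ := Real.exp (rstar * (B - P)) with hκ
  -- measurability of S
  have hSmeas : ∀ t, Measurable (S t) := by
    intro t
    induction t with
    | zero =>
        rw [show S 0 = fun _ => (0:ℝ) from funext hS0]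
        exact measurable_const
    | succ t ih =>
        rw [show S (t+1) = fun ω =>
          min (S t ω + Z (t + 1) ω - (if P ≤ S t ω then P else 0)) B from funext (hS t)]
        exact ((ih.add (hmeas (t+1))).sub
          (Measurable.ite (measurableSet_le measurable_const ih) measurable_const
            measurable_const)).min measurable_const
  set p : ℕ → ℝ := fun t => (μ {ω | P ≤ S t ω}).toReal with hp
  set q : ℕ → ℝ := fun t => (μ {ω | S t ω < P}).toReal with hq
  set a : ℕ → ℝ := fun t => (μ {ω | -P < ∑ i ∈ Icc 1 t, (P - Z i ω)}).toReal with ha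
  have hpq : ∀ t, p t = 1 - q t := by
    intro t
    have hms : MeasurableSet {ω | P ≤ S t ω} := measurableSet_le measurable_const (hSmeas t)
    have hc : {ω | S t ω < P} = {ω | P ≤ S t ω}ᶜ := by
      ext ω; simp [not_le]
    have : q t = 1 - p t := by
      rw [hq]
      simp only
      rw [hc, measure_compl hms (measure_ne_top μ _), measure_univ,
        ENNReal.toReal_sub_of_le prob_le_one ENNReal.one_ne_top, ENNReal.toReal_one]
    rw [this]; ring
  have hp01 : ∀ t, 0 ≤ p t ∧ p t ≤ 1 := by
    intro t
    refine ⟨ENNReal.toReal_nonneg, ?_⟩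
    rw [hp]
    simp only
    have h1 := ENNReal.toReal_mono ENNReal.one_ne_top
      (prob_le_one (μ := μ) (s := {ω | P ≤ S t ω}))
    simpa using h1
  -- the inclusion
  have hsubset : ∀ t, {ω | S t ω < P} ⊆
      {ω | -P < ∑ i ∈ Icc 1 t, (P - Z i ω)} ∪
        ⋃ j ∈ (Icc 1 t : Finset ℕ), {ω | B - P < ∑ i ∈ Icc j t, (P - Z i ω)} := by
    intro t ω hω
    simp only [Set.mem_setOf_eq] at hω
    by_cases hA : -P < ∑ i ∈ Icc 1 t, (P - Z i ω)
    · exact Or.inl hA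
    · right
      push_neg at hA
      have hdom := tpfM_dom (fun i => Z i ω) (fun n => S n ω) P B hP.le (hS0 ω)
        (fun n => hS n ω) t
      have h1 : B - P < tpfM (fun i => P - Z i ω) t := by
        have hlt : B - P < max (B + ∑ i ∈ Icc 1 t, (P - Z i ω))
            (tpfM (fun i => P - Z i ω) t) := lt_of_lt_of_le (by linarith) hdom
        rcases lt_max_iff.mp hlt with h | h
        · linarith
        · exact h
      obtain ⟨j, hj1, hjt, hsum⟩ := tpfM_exists _ t (B - P) h1
        (lt_trans (by linarith) h1)
      simp only [Set.mem_iUnion]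
      exact ⟨j, Finset.mem_Icc.mpr ⟨hj1, hjt⟩, hsum⟩
  -- measurability of the pieces
  have hAmeas : ∀ t, MeasurableSet {ω | -P < ∑ i ∈ Icc 1 t, (P - Z i ω)} :=
    fun t => measurableSet_lt measurable_const
      (Finset.measurable_sum _ fun i _ => measurable_const.sub (hmeas i))
  have hUmeas : ∀ t, MeasurableSet
      (⋃ j ∈ (Icc 1 t : Finset ℕ), {ω | B - P < ∑ i ∈ Icc j t, (P - Z i ω)}) := by
    intro t
    refine Set.Finite.measurableSet_biUnion (Finset.finite_toSet _) fun j _ => ?_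
    exact measurableSet_lt measurable_const
      (Finset.measurable_sum _ fun i _ => measurable_const.sub (hmeas i))
  -- the per-t bound
  have hqb : ∀ t, q t ≤ κ + a t := by
    intro t
    have hcore := tpf_core μ Z hmeas hindep hident hnonneg P B rstar hP hB hrstar hroot t
    have hmono : μ {ω | S t ω < P} ≤
        μ {ω | -P < ∑ i ∈ Icc 1 t, (P - Z i ω)} +
          μ (⋃ j ∈ (Icc 1 t : Finset ℕ), {ω | B - P < ∑ i ∈ Icc j t, (P - Z i ω)}) :=
      (measure_mono (hsubset t)).trans (measure_union_le _ _)
    have h2 : q t ≤ a t +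
        (μ (⋃ j ∈ (Icc 1 t : Finset ℕ), {ω | B - P < ∑ i ∈ Icc j t, (P - Z i ω)})).toReal := by
      rw [hq, ha]
      simp only
      rw [← ENNReal.toReal_add (measure_ne_top μ _) (measure_ne_top μ _)]
      exact ENNReal.toReal_mono (by
        exact ENNReal.add_ne_top.mpr ⟨measure_ne_top μ _, measure_ne_top μ _⟩) hmono
    linarith
  -- a tends to zero
  have hatend : Tendsto a atTop (𝓝 0) :=
    tpf_lln μ Z hmeas hindep hident hZint lamE P hlamE hP hgt
  -- Cesàro average of a tends to zero
  set c : ℕ → ℝ := fun n => (1 / (n:ℝ)) * ∑ t ∈ Icc 1 n, a t with hc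
  have hctend : Tendsto c atTop (𝓝 0) := by
    have h1 : Tendsto (fun i : ℕ => a (i + 1)) atTop (𝓝 0) :=
      hatend.comp (tendsto_add_atTop_nat 1)
    have h2 := h1.cesaro
    refine h2.congr fun n => ?_
    rw [hc]
    simp only
    rw [one_div, show Icc 1 n = Ico 1 (n+1) from by rw [Finset.Ico_add_one_right_eq_Icc],
      Finset.sum_Ico_eq_sum_range]
    simp [add_comm]
  set f : ℕ → ℝ := fun n => (1 / (n : ℝ)) * ∑ t ∈ Finset.Icc 1 n, p t with hf
  -- lower bound eventually
  have hlow : ∀ᶠ n : ℕ in atTop, (1 - κ) - c n ≤ f n := by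
    filter_upwards [eventually_ge_atTop 1] with n hn
    have hnpos : (0:ℝ) < n := by exact_mod_cast hn
    have hsum : ∑ t ∈ Icc 1 n, ((1 - κ) - a t) ≤ ∑ t ∈ Icc 1 n, p t := by
      refine Finset.sum_le_sum fun t _ => ?_
      have := hqb t
      rw [hpq t]
      linarith
    have hlhs : ∑ t ∈ Icc 1 n, ((1 - κ) - a t) = n * (1 - κ) - ∑ t ∈ Icc 1 n, a t := by
      rw [Finset.sum_sub_distrib, Finset.sum_const, Nat.card_Icc]
      simp [nsmul_eq_mul]
    rw [hf, hc]
    simp only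
    rw [show (1 - κ) - 1 / (n:ℝ) * ∑ t ∈ Icc 1 n, a t
        = 1 / (n:ℝ) * (n * (1 - κ) - ∑ t ∈ Icc 1 n, a t) from by
      field_simp]
    apply mul_le_mul_of_nonneg_left _ (by positivity)
    rw [← hlhs]
    exact hsum
  have hgtend : Tendsto (fun n => (1 - κ) - c n) atTop (𝓝 (1 - κ)) := by
    have h0 : Tendsto (fun _ : ℕ => (1 - κ : ℝ)) atTop (𝓝 (1 - κ)) := tendsto_const_nhds
    simpa using h0.sub hctend
  have hfub : ∀ n, f n ≤ 1 := by
    intro n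
    rcases Nat.eq_zero_or_pos n with h0 | hpos
    · rw [hf]; simp [h0]
    · have hnpos : (0:ℝ) < n := by exact_mod_cast hpos
      rw [hf]
      simp only
      have : ∑ t ∈ Icc 1 n, p t ≤ ∑ t ∈ Icc 1 n, (1:ℝ) :=
        Finset.sum_le_sum fun t _ => (hp01 t).2
      rw [Finset.sum_const, Nat.card_Icc] at this
      simp only [nsmul_eq_mul, mul_one] at this
      calc (1 / (n:ℝ)) * ∑ t ∈ Icc 1 n, p t ≤ (1 / (n:ℝ)) * n := by
            apply mul_le_mul_of_nonneg_left _ (by positivity)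
            calc ∑ t ∈ Icc 1 n, p t ≤ ((n + 1 - 1 : ℕ) : ℝ) := this
              _ = (n:ℝ) := by push_cast [Nat.add_sub_cancel]; ring
        _ = 1 := by field_simp
  have hflb : ∀ n, 0 ≤ f n := by
    intro n
    rw [hf]
    simp only
    apply mul_nonneg (by positivity)
    exact Finset.sum_nonneg fun t _ => (hp01 t).1
  constructor
  · have h1 : liminf (fun n => (1 - κ) - c n) atTop ≤ liminf f atTop := by
      refine liminf_le_liminf hlow ?_ ?_
      · exact hgtend.isBoundedUnder_ge
      · exact isCoboundedUnder_ge_of_le atTop (x := 1) hfub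
    rwa [hgtend.liminf_eq] at h1
  · have h2 : liminf f atTop ≤ liminf (fun _ : ℕ => (1:ℝ)) atTop := by
      refine liminf_le_liminf (Eventually.of_forall hfub) ?_ ?_
      · exact isBoundedUnder_of ⟨0, fun n => hflb n⟩
      · exact tendsto_const_nhds.isCoboundedUnder_ge
    rwa [liminf_const 1] at h2
end

section
/- Let P be a positive integer and λ_e ∈ (0, 1). Consider the Markov transition matrix on states {0, 1, ..., P} given by: for 0 ≤ m ≤ P − 1, p(m, m+1) = λ_e and p(m, m) = 1 − λ_e; and p(P, 1) = λ_e, p(P, 0) = 1 − λ_e; all other entries are 0. Then the vector π with π_0 = (1 − λ_e)/P, π_m = 1/P for 1 ≤ m ≤ P − 1, and π_P = λ_e/P is a probability distribution (nonnegative entries summing to 1) satisfying the stationarity equations π_n = Σ_{m=0}^P π_m·p(m, n) for all n ∈ {0, ..., P}. In particular the stationary transmission probability is π_P = λ_e/P. -/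
open Finset

/-- **Stationary distribution for binary energy arrivals.** For the Markov chain on
states `{0, 1, ..., P}` with transition probabilities `p m (m+1) = λe`,
`p m m = 1 - λe` for `m < P`, `p P 1 = λe`, `p P 0 = 1 - λe` (all other entries
zero), the vector `π` with `π 0 = (1 - λe)/P`, `π m = 1/P` for `1 ≤ m ≤ P - 1`,
and `π P = λe/P` is a probability distribution satisfying the stationarity
equations; in particular the stationary transmission probability is
`π P = λe/P`. -/
theorem binary_arrivals_stationary_distribution
    (P : ℕ) (hP : 0 < P) (lamE : ℝ) (h0 : 0 < lamE) (h1 : lamE < 1)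
    (p : ℕ → ℕ → ℝ)
    (hp : ∀ m n : ℕ, p m n =
      if m < P ∧ n = m + 1 then lamE
      else if m < P ∧ n = m then 1 - lamE
      else if m = P ∧ n = 1 then lamE
      else if m = P ∧ n = 0 then 1 - lamE
      else 0)
    (pi : ℕ → ℝ)
    (hpi : ∀ m : ℕ, pi m =
      if m = 0 then (1 - lamE) / P
      else if m = P then lamE / P
      else if m ≤ P then 1 / P
      else 0) :
    (∀ n : ℕ, n ≤ P → 0 ≤ pi n) ∧
    (∑ m ∈ Finset.range (P + 1), pi m = 1) ∧
    (∀ n : ℕ, n ≤ P → pi n = ∑ m ∈ Finset.range (P + 1), pi m * p m n) ∧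
    pi P = lamE / P := by
  have hPne : P ≠ 0 := hP.ne'
  have hPpos : (0:ℝ) < (P:ℝ) := by exact_mod_cast hP
  have hPne' : (P:ℝ) ≠ 0 := ne_of_gt hPpos
  refine ⟨?_, ?_, ?_, ?_⟩
  · intro n _; rw [hpi]
    split_ifs
    all_goals first
      | exact le_refl 0
      | exact div_nonneg (by linarith) hPpos.le
      | exact div_nonneg h0.le hPpos.le
      | exact div_nonneg (by norm_num) hPpos.le
  · obtain ⟨Q, rfl⟩ : ∃ Q, P = Q + 1 := ⟨P - 1, by omega⟩
    rw [Finset.sum_range_succ', Finset.sum_range_succ]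
    have hmid : ∀ i ∈ Finset.range Q, pi (i + 1) = 1 / ((Q:ℝ) + 1) := by
      intro i hi
      rw [hpi]
      have hi' := Finset.mem_range.mp hi
      rw [if_neg (show ¬ i + 1 = 0 by omega), if_neg (show ¬ i + 1 = Q + 1 by omega),
        if_pos (show i + 1 ≤ Q + 1 by omega)]
      push_cast
      ring
    rw [Finset.sum_congr rfl hmid, Finset.sum_const, hpi 0, hpi (Q + 1)]
    rw [if_pos rfl, if_neg (show ¬ Q + 1 = 0 by omega), if_pos rfl]
    have hQ : ((Q:ℝ) + 1) ≠ 0 := by positivity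
    push_cast
    field_simp
    rw [Finset.card_range, nsmul_eq_mul, mul_one_div, mul_div_cancel₀ (Q:ℝ) hQ]
    ring
  · intro n hn
    have key : ∀ m, pi m * p m n =
        (if m < P ∧ n = m + 1 then pi m * lamE else 0)
        + (if m < P ∧ n = m then pi m * (1 - lamE) else 0)
        + (if m = P ∧ n = 1 then pi m * lamE else 0)
        + (if m = P ∧ n = 0 then pi m * (1 - lamE) else 0) := by
      intro m; rw [hp]
      split_ifs <;> first | ring1 | (exfalso; omega)
    rw [Finset.sum_congr rfl (fun m _ => key m), Finset.sum_add_distrib,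
      Finset.sum_add_distrib, Finset.sum_add_distrib]
    have hT3 : (∑ m ∈ Finset.range (P + 1), if m = P ∧ n = 1 then pi m * lamE else 0)
        = if n = 1 then pi P * lamE else 0 := by
      rw [Finset.sum_eq_single_of_mem P (Finset.mem_range.mpr (by omega))
        (fun b _ hb => if_neg (by tauto))]
      by_cases hn1 : n = 1
      · rw [if_pos ⟨rfl, hn1⟩, if_pos hn1]
      · rw [if_neg (by tauto), if_neg hn1]
    have hT4 : (∑ m ∈ Finset.range (P + 1), if m = P ∧ n = 0 then pi m * (1 - lamE) else 0)
        = if n = 0 then pi P * (1 - lamE) else 0 := by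
      rw [Finset.sum_eq_single_of_mem P (Finset.mem_range.mpr (by omega))
        (fun b _ hb => if_neg (by tauto))]
      by_cases hn1 : n = 0
      · rw [if_pos ⟨rfl, hn1⟩, if_pos hn1]
      · rw [if_neg (by tauto), if_neg hn1]
    have hT2 : (∑ m ∈ Finset.range (P + 1), if m < P ∧ n = m then pi m * (1 - lamE) else 0)
        = if n < P then pi n * (1 - lamE) else 0 := by
      rw [Finset.sum_eq_single_of_mem n (Finset.mem_range.mpr (by omega))
        (fun b _ hb => if_neg (by omega))]
      by_cases hnP : n < P
      · rw [if_pos ⟨hnP, rfl⟩, if_pos hnP]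
      · rw [if_neg (by omega), if_neg hnP]
    rw [hT2, hT3, hT4]
    rcases Nat.eq_zero_or_pos n with hn0 | hn0
    · subst hn0
      have hT1 : (∑ m ∈ Finset.range (P + 1), if m < P ∧ (0:ℕ) = m + 1 then pi m * lamE else 0)
          = 0 := Finset.sum_eq_zero (fun m _ => if_neg (by omega))
      rw [hT1, if_pos hP, if_neg (show ¬ (0:ℕ) = 1 by omega), if_pos rfl]
      rw [hpi 0, hpi P, if_pos rfl, if_neg hPne, if_pos rfl]
      field_simp
      ring
    · -- n ≥ 1
      have hT1 : (∑ m ∈ Finset.range (P + 1), if m < P ∧ n = m + 1 then pi m * lamE else 0)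
          = pi (n - 1) * lamE := by
        rw [Finset.sum_eq_single_of_mem (n - 1) (Finset.mem_range.mpr (by omega))
          (fun b _ hb => if_neg (by omega))]
        rw [if_pos (show n - 1 < P ∧ n = n - 1 + 1 by omega)]
      rw [hT1, if_neg (show ¬ n = 0 by omega)]
      rcases eq_or_lt_of_le hn with hnP | hnP
      · -- n = P
        rw [if_neg (show ¬ n < P by omega)]
        rcases Nat.lt_or_ge 1 n with h2 | h2
        · -- P ≥ 2
          rw [if_neg (show ¬ n = 1 by omega)]
          rw [hpi (n - 1), if_neg (show ¬ n - 1 = 0 by omega),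
            if_neg (show ¬ n - 1 = P by omega), if_pos (show n - 1 ≤ P by omega)]
          rw [hpi n, if_neg (show ¬ n = 0 by omega), if_pos hnP]
          ring
        · -- P = 1, n = 1
          have hn1 : n = 1 := by omega
          have hP1 : P = 1 := by omega
          subst hn1; subst hP1
          rw [if_pos rfl]
          rw [hpi 0, if_pos rfl, hpi 1, if_neg (by omega), if_pos rfl]
          norm_num
          ring
      · -- n < P
        rw [if_pos hnP]
        rcases Nat.lt_or_ge 1 n with h2 | h2
        · -- 2 ≤ n < P
          rw [if_neg (show ¬ n = 1 by omega)]
          rw [hpi (n - 1), if_neg (show ¬ n - 1 = 0 by omega),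
            if_neg (show ¬ n - 1 = P by omega), if_pos (show n - 1 ≤ P by omega)]
          rw [hpi n, if_neg (show ¬ n = 0 by omega), if_neg (show ¬ n = P by omega),
            if_pos hn]
          ring
        · -- n = 1 < P
          have hn1 : n = 1 := by omega
          subst hn1
          rw [if_pos rfl]
          rw [hpi 0, if_pos rfl,
            hpi 1, if_neg (show ¬ (1:ℕ) = 0 by omega), if_neg (show ¬ 1 = P by omega),
            if_pos (show 1 ≤ P by omega),
            hpi P, if_neg hPne, if_pos rfl]
          field_simp
          ring
  · rw [hpi, if_neg hPne, if_pos rfl]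
end

section
/- Assume λ_e > θ and λ_0 ≤ ζ(λ_e). Then θ·(λ_0/μ_ε)^{α/2} < 1, the interval [θ/(1 − θ·(λ_0/μ_ε)^{α/2}), λ_e] is nonempty, every P in this interval satisfies P ≥ θ and λ_0·min(1, λ_e/P) ≤ ζ(P), and sup{min(1, λ_e/P) : P ≥ θ, λ_0·min(1, λ_e/P) ≤ ζ(P)} = 1; consequently the maximum network throughput equals R* = λ_0·log_2(1 + θ). -/
open Real

/-- **Maximum network throughput, sparse case `λ0 ≤ ζ(λe)`.** With network
interference temperature `ζ(P) = μ_ε (1/θ - 1/P)^(2/α)` and λe > θ, if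
`λ0 ≤ ζ(λe)` then `θ (λ0/μ_ε)^(α/2) < 1`, the interval
`[θ/(1 - θ (λ0/μ_ε)^(α/2)), λe]` is nonempty, every `P` in it is admissible
(`P ≥ θ` and `λ0 · min 1 (λe/P) ≤ ζ(P)`), the optimal transmission probability
`sup {min 1 (λe/P) : P admissible}` equals `1`, and hence the maximum network
throughput equals `R* = λ0 log₂(1+θ)`. -/
theorem max_throughput_sparse_case
    (θ α muEps lam0 lamE : ℝ)
    (hθ : 0 < θ) (hα : 2 < α) (hmu : 0 < muEps) (hlam0 : 0 < lam0)
    (hlamE : θ < lamE)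
    (ζ : ℝ → ℝ)
    (hζ : ∀ P : ℝ, θ ≤ P → ζ P = muEps * (1 / θ - 1 / P) ^ (2 / α))
    (hsparse : lam0 ≤ ζ lamE) :
    θ * (lam0 / muEps) ^ (α / 2) < 1 ∧
    θ / (1 - θ * (lam0 / muEps) ^ (α / 2)) ≤ lamE ∧
    (∀ P ∈ Set.Icc (θ / (1 - θ * (lam0 / muEps) ^ (α / 2))) lamE,
      θ ≤ P ∧ lam0 * min 1 (lamE / P) ≤ ζ P) ∧
    sSup {v : ℝ | ∃ P : ℝ, θ ≤ P ∧ lam0 * min 1 (lamE / P) ≤ ζ P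
        ∧ v = min 1 (lamE / P)} = 1 ∧
    lam0 * Real.logb 2 (1 + θ) *
        sSup {v : ℝ | ∃ P : ℝ, θ ≤ P ∧ lam0 * min 1 (lamE / P) ≤ ζ P
          ∧ v = min 1 (lamE / P)}
      = lam0 * Real.logb 2 (1 + θ) := by
  have hα0 : (0:ℝ) < α := by linarith
  have hlamE0 : 0 < lamE := lt_trans hθ hlamE
  have h1 : 0 < 1 / θ - 1 / lamE := by
    have := one_div_lt_one_div_of_lt hθ hlamE
    linarith
  set c : ℝ := (lam0 / muEps) ^ (α / 2) with hc
  have hc0 : 0 ≤ c := Real.rpow_nonneg (by positivity) _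
  have hζE : ζ lamE = muEps * (1 / θ - 1 / lamE) ^ (2 / α) := hζ lamE hlamE.le
  have hdivle : lam0 / muEps ≤ (1 / θ - 1 / lamE) ^ (2 / α) := by
    rw [div_le_iff₀ hmu, mul_comm]
    rw [hζE] at hsparse
    exact hsparse
  have hkey : ((1 / θ - 1 / lamE) ^ (2 / α)) ^ (α / 2) = 1 / θ - 1 / lamE := by
    rw [← Real.rpow_mul h1.le]
    have : 2 / α * (α / 2) = 1 := by field_simp
    rw [this, Real.rpow_one]
  have hc_le : c ≤ 1 / θ - 1 / lamE := by
    calc c ≤ ((1 / θ - 1 / lamE) ^ (2 / α)) ^ (α / 2) :=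
          Real.rpow_le_rpow (by positivity) hdivle (by positivity)
      _ = 1 / θ - 1 / lamE := hkey
  have hθc : θ * c ≤ 1 - θ / lamE := by
    have h2 : θ * c ≤ θ * (1 / θ - 1 / lamE) := mul_le_mul_of_nonneg_left hc_le hθ.le
    have h3 : θ * (1 / θ - 1 / lamE) = 1 - θ / lamE := by
      field_simp
    linarith
  have hθlamE : 0 < θ / lamE := by positivity
  have hclaim1 : θ * c < 1 := by linarith
  have hD : 0 < 1 - θ * c := by linarith
  have hDlow : θ / lamE ≤ 1 - θ * c := by linarith
  have hclaim2 : θ / (1 - θ * c) ≤ lamE := by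
    rw [div_le_iff₀ hD]
    have := mul_le_mul_of_nonneg_left hDlow hlamE0.le
    have heq : lamE * (θ / lamE) = θ := by field_simp
    nlinarith
  have hclaim3 : ∀ P ∈ Set.Icc (θ / (1 - θ * c)) lamE,
      θ ≤ P ∧ lam0 * min 1 (lamE / P) ≤ ζ P := by
    intro P hP
    obtain ⟨hPl, hPr⟩ := hP
    have hθD : θ ≤ θ / (1 - θ * c) := by
      rw [le_div_iff₀ hD]
      nlinarith [mul_nonneg hθ.le (mul_nonneg hθ.le hc0)]
    have hθP : θ ≤ P := le_trans hθD hPl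
    have hP0 : 0 < P := lt_of_lt_of_le hθ hθP
    refine ⟨hθP, ?_⟩
    have hmin : min 1 (lamE / P) = 1 := by
      rw [min_eq_left]
      rw [le_div_iff₀ hP0]
      linarith
    rw [hmin, mul_one, hζ P hθP]
    have hDθpos : 0 < θ / (1 - θ * c) := by positivity
    have hinv : 1 / P ≤ 1 / (θ / (1 - θ * c)) :=
      one_div_le_one_div_of_le hDθpos hPl
    have hinveq : 1 / (θ / (1 - θ * c)) = 1 / θ - c := by
      rw [one_div_div]
      field_simp
    have hcP : c ≤ 1 / θ - 1 / P := by
      rw [hinveq] at hinv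
      linarith
    have hkey2 : c ^ (2 / α) = lam0 / muEps := by
      rw [hc, ← Real.rpow_mul (by positivity)]
      have : α / 2 * (2 / α) = 1 := by field_simp
      rw [this, Real.rpow_one]
    calc lam0 = muEps * (lam0 / muEps) := by field_simp
      _ = muEps * c ^ (2 / α) := by rw [hkey2]
      _ ≤ muEps * (1 / θ - 1 / P) ^ (2 / α) :=
          mul_le_mul_of_nonneg_left (Real.rpow_le_rpow hc0 hcP (by positivity)) hmu.le
  have h1mem : (1:ℝ) ∈ {v : ℝ | ∃ P : ℝ, θ ≤ P ∧ lam0 * min 1 (lamE / P) ≤ ζ P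
      ∧ v = min 1 (lamE / P)} := by
    refine ⟨lamE, hlamE.le, ?_, ?_⟩ <;>
      simp [div_self hlamE0.ne', hsparse]
  have hbdd : ∀ v ∈ {v : ℝ | ∃ P : ℝ, θ ≤ P ∧ lam0 * min 1 (lamE / P) ≤ ζ P
      ∧ v = min 1 (lamE / P)}, v ≤ 1 := by
    rintro v ⟨P, _, _, rfl⟩
    exact min_le_left _ _
  have hclaim4 : sSup {v : ℝ | ∃ P : ℝ, θ ≤ P ∧ lam0 * min 1 (lamE / P) ≤ ζ P
      ∧ v = min 1 (lamE / P)} = 1 := by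
    apply le_antisymm
    · exact csSup_le ⟨1, h1mem⟩ hbdd
    · exact le_csSup ⟨1, hbdd⟩ h1mem
  exact ⟨hclaim1, hclaim2, hclaim3, hclaim4, by rw [hclaim4, mul_one]⟩
end

section
/- Assume λ_e > θ and λ_0 > ζ(λ_e). Then there exists a unique P* ≥ λ_e with λ_0·λ_e/P* = ζ(P*); the number x = √(P*) solves x^α − θ·x^{α−2} − θ·(λ_0·λ_e/μ_ε)^{α/2} = 0; and sup{min(1, λ_e/P) : P ≥ θ, λ_0·min(1, λ_e/P) ≤ ζ(P)} = λ_e/P*, so the maximum network throughput equals R* = (λ_0·λ_e/P*)·log_2(1 + θ). -/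
open Real

/-- **Maximum network throughput, dense case `λ0 > ζ(λe)`.** With network
interference temperature `ζ(P) = μ_ε (1/θ - 1/P)^(2/α)` and `λe > θ`, if
`λ0 > ζ(λe)` then there exists a unique `P* ≥ λe` with `λ0 λe / P* = ζ(P*)`;
moreover `x = √P*` solves `x^α - θ x^(α-2) - θ (λ0 λe/μ_ε)^(α/2) = 0`, the optimal
transmission probability `sup {min 1 (λe/P) : P admissible}` equals `λe/P*`, and
hence the maximum network throughput equals `R* = (λ0 λe/P*) log₂(1+θ)`. -/
theorem max_throughput_dense_case
    (θ α muEps lam0 lamE : ℝ)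
    (hθ : 0 < θ) (hα : 2 < α) (hmu : 0 < muEps) (hlam0 : 0 < lam0)
    (hlamE : θ < lamE)
    (ζ : ℝ → ℝ)
    (hζ : ∀ P : ℝ, θ ≤ P → ζ P = muEps * (1 / θ - 1 / P) ^ (2 / α))
    (hdense : ζ lamE < lam0) :
    ∃ Pstar : ℝ, lamE ≤ Pstar ∧ lam0 * lamE / Pstar = ζ Pstar ∧
      (∀ Q : ℝ, lamE ≤ Q → lam0 * lamE / Q = ζ Q → Q = Pstar) ∧
      (Real.sqrt Pstar) ^ α - θ * (Real.sqrt Pstar) ^ (α - 2)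
        - θ * (lam0 * lamE / muEps) ^ (α / 2) = 0 ∧
      sSup {v : ℝ | ∃ P : ℝ, θ ≤ P ∧ lam0 * min 1 (lamE / P) ≤ ζ P
          ∧ v = min 1 (lamE / P)} = lamE / Pstar ∧
      lam0 * Real.logb 2 (1 + θ) *
          sSup {v : ℝ | ∃ P : ℝ, θ ≤ P ∧ lam0 * min 1 (lamE / P) ≤ ζ P
            ∧ v = min 1 (lamE / P)}
        = (lam0 * lamE / Pstar) * Real.logb 2 (1 + θ) := by
  have hα0 : (0:ℝ) < α := by linarith
  have hlamE0 : (0:ℝ) < lamE := hθ.trans hlamE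
  have hexp : 0 < 2 / α := by positivity
  set F : ℝ → ℝ := fun P => muEps * (1 / θ - 1 / P) ^ (2 / α) with hFdef
  set c : ℝ := lam0 * lamE with hcdef
  have hc : 0 < c := mul_pos hlam0 hlamE0
  -- basic base facts
  have hbase0 : ∀ P : ℝ, θ ≤ P → 0 ≤ 1 / θ - 1 / P := by
    intro P hP
    have := one_div_le_one_div_of_le hθ hP
    linarith
  have hbase : ∀ P : ℝ, lamE ≤ P → 0 < 1 / θ - 1 / P := by
    intro P hP
    have hP0 : 0 < P := hlamE0.trans_le hP
    have := one_div_lt_one_div_of_lt hθ (hlamE.trans_le hP)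
    linarith
  -- strict monotonicity of F on [θ, ∞)
  have hFmono : ∀ a b : ℝ, θ ≤ a → a < b → F a < F b := by
    intro a b ha hab
    have ha0 : 0 < a := hθ.trans_le ha
    have h2 : 1 / θ - 1 / a < 1 / θ - 1 / b := by
      have := one_div_lt_one_div_of_lt ha0 hab
      linarith
    exact (mul_lt_mul_iff_right₀ hmu).2
      (Real.rpow_lt_rpow (hbase0 a ha) h2 hexp)
  have hFle : ∀ a b : ℝ, θ ≤ a → a ≤ b → F a ≤ F b := by
    intro a b ha hab
    rcases eq_or_lt_of_le hab with rfl | h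
    · exact le_rfl
    · exact (hFmono a b ha h).le
  -- positivity of F above θ
  have hFpos : ∀ P : ℝ, lamE ≤ P → 0 < F P :=
    fun P hP => mul_pos hmu (Real.rpow_pos_of_pos (hbase P hP) _)
  -- continuity
  have hcont : ∀ M : ℝ, ContinuousOn (fun P => c / P - F P) (Set.Icc lamE M) := by
    intro M
    have hne : ∀ x ∈ Set.Icc lamE M, x ≠ 0 := fun x hx =>
      ne_of_gt (hlamE0.trans_le hx.1)
    apply ContinuousOn.sub
    · exact ContinuousOn.div continuousOn_const continuousOn_id hne
    · apply ContinuousOn.mul continuousOn_const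
      apply ContinuousOn.rpow_const
      · exact ContinuousOn.sub continuousOn_const
          (ContinuousOn.div continuousOn_const continuousOn_id hne)
      · exact fun x _ => Or.inr hexp.le
  -- choose the right endpoint
  have hF2 : 0 < F (2 * lamE) := hFpos _ (by linarith)
  set M : ℝ := max (2 * lamE) (c / F (2 * lamE)) with hMdef
  have hM1 : 2 * lamE ≤ M := le_max_left _ _
  have hM2 : c / F (2 * lamE) ≤ M := le_max_right _ _
  have hMlamE : lamE ≤ M := by linarith
  have hM0 : 0 < M := by linarith
  have hendM : c / M - F M ≤ 0 := by
    have h1 : c / M ≤ F (2 * lamE) := by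
      rw [div_le_iff₀ hM0]
      calc c = c / F (2 * lamE) * F (2 * lamE) := by field_simp
        _ ≤ M * F (2 * lamE) := by
            exact mul_le_mul_of_nonneg_right hM2 hF2.le
        _ = F (2 * lamE) * M := mul_comm _ _
    have h2 : F (2 * lamE) ≤ F M := hFle _ _ (by linarith) hM1
    linarith
  have hζF : ∀ P : ℝ, θ ≤ P → ζ P = F P := by
    intro P hP; simp only [hFdef]; exact hζ P hP
  have hFlamE : F lamE < lam0 := by
    rw [← hζF lamE hlamE.le]; exact hdense
  have hendE : 0 ≤ c / lamE - F lamE := by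
    have : c / lamE = lam0 := by field_simp [hcdef]; rw [hcdef]; ring
    rw [this]; linarith
  -- existence of Pstar by IVT
  obtain ⟨Pstar, hPmem, hPzero⟩ :=
    intermediate_value_Icc' hMlamE (hcont M) (Set.mem_Icc.2 ⟨hendM, hendE⟩)
  have hPge : lamE ≤ Pstar := hPmem.1
  have hPpos : 0 < Pstar := hlamE0.trans_le hPge
  have hPθ : θ ≤ Pstar := (hlamE.trans_le hPge).le
  have hPeq : c / Pstar = F Pstar := by
    have : c / Pstar - F Pstar = 0 := hPzero
    linarith
  have hζP : ζ Pstar = F Pstar := hζF _ hPθ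
  -- uniqueness
  have huniq : ∀ Q : ℝ, lamE ≤ Q → lam0 * lamE / Q = ζ Q → Q = Pstar := by
    intro Q hQ hQeq
    have hQ0 : 0 < Q := hlamE0.trans_le hQ
    have hQθ : θ ≤ Q := (hlamE.trans_le hQ).le
    have hQF : c / Q = F Q := by rw [hcdef, hQeq, hζF Q hQθ]
    rcases lt_trichotomy Q Pstar with h | h | h
    · exfalso
      have h1 : F Q < F Pstar := hFmono _ _ hQθ h
      have h2 : c / Pstar < c / Q := div_lt_div_of_pos_left hc hQ0 h
      rw [hQF, hPeq] at h2
      linarith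
    · exact h
    · exfalso
      have h1 : F Pstar < F Q := hFmono _ _ hPθ h
      have h2 : c / Q < c / Pstar := div_lt_div_of_pos_left hc hPpos h
      rw [hQF, hPeq] at h2
      linarith
  -- polynomial equation for x = sqrt Pstar
  have ht : 0 < 1 / θ - 1 / Pstar := hbase _ hPge
  have hxα : (Real.sqrt Pstar) ^ α = Pstar ^ (α / 2) := by
    rw [Real.sqrt_eq_rpow, ← Real.rpow_mul hPpos.le]
    congr 1; ring
  have hxα2 : (Real.sqrt Pstar) ^ (α - 2) = Pstar ^ (α / 2 - 1) := by
    rw [Real.sqrt_eq_rpow, ← Real.rpow_mul hPpos.le]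
    congr 1; ring
  have hsub : Pstar ^ (α / 2 - 1) = Pstar ^ (α / 2) / Pstar := by
    rw [Real.rpow_sub hPpos, Real.rpow_one]
  have hkey : (c / Pstar) ^ (α / 2) = muEps ^ (α / 2) * (1 / θ - 1 / Pstar) := by
    rw [hPeq, hFdef]
    rw [Real.mul_rpow hmu.le (Real.rpow_nonneg ht.le _),
      ← Real.rpow_mul ht.le]
    have : 2 / α * (α / 2) = 1 := by field_simp
    rw [this, Real.rpow_one]
  have hcP : (c / Pstar) ^ (α / 2) = c ^ (α / 2) / Pstar ^ (α / 2) :=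
    Real.div_rpow hc.le hPpos.le _
  have hcmu : (c / muEps) ^ (α / 2) = c ^ (α / 2) / muEps ^ (α / 2) :=
    Real.div_rpow hc.le hmu.le _
  have hPa : 0 < Pstar ^ (α / 2) := Real.rpow_pos_of_pos hPpos _
  have hmua : 0 < muEps ^ (α / 2) := Real.rpow_pos_of_pos hmu _
  have hkey2 : (c / muEps) ^ (α / 2) = (1 / θ - 1 / Pstar) * Pstar ^ (α / 2) := by
    rw [hcmu]
    rw [hcP] at hkey
    field_simp at hkey ⊢
    linarith [hkey]
  have hpoly : (Real.sqrt Pstar) ^ α - θ * (Real.sqrt Pstar) ^ (α - 2)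
      - θ * (lam0 * lamE / muEps) ^ (α / 2) = 0 := by
    rw [hxα, hxα2, hsub, ← hcdef, hkey2]
    field_simp
    ring
  -- the supremum
  have hgreatest : IsGreatest {v : ℝ | ∃ P : ℝ, θ ≤ P ∧ lam0 * min 1 (lamE / P) ≤ ζ P
      ∧ v = min 1 (lamE / P)} (lamE / Pstar) := by
    constructor
    · refine ⟨Pstar, hPθ, ?_, ?_⟩
      · rw [min_eq_right ((div_le_one hPpos).2 hPge), hζP, ← hPeq, hcdef]
        rw [mul_div_assoc]
      · rw [min_eq_right ((div_le_one hPpos).2 hPge)]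
    · rintro v ⟨P, hPθ', hadm, rfl⟩
      have hP0 : 0 < P := hθ.trans_le hPθ'
      rw [hζF P hPθ'] at hadm
      by_cases hPle : P ≤ lamE
      · exfalso
        have h1 : (1:ℝ) ≤ lamE / P := (one_le_div hP0).2 hPle
        rw [min_eq_left h1, mul_one] at hadm
        have h2 : F P ≤ F lamE := hFle _ _ hPθ' hPle
        linarith
      · push_neg at hPle
        have h1 : lamE / P ≤ 1 := (div_le_one hP0).2 hPle.le
        rw [min_eq_right h1]
        rw [min_eq_right h1, ← mul_div_assoc, ← hcdef] at hadm
        have hPP : Pstar ≤ P := by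
          by_contra h
          push_neg at h
          have h2 : F P < F Pstar := hFmono _ _ hPθ' h
          have h3 : c / Pstar < c / P := div_lt_div_of_pos_left hc hP0 h
          rw [hPeq] at h3
          linarith
        gcongr
  have hsup : sSup {v : ℝ | ∃ P : ℝ, θ ≤ P ∧ lam0 * min 1 (lamE / P) ≤ ζ P
      ∧ v = min 1 (lamE / P)} = lamE / Pstar := hgreatest.csSup_eq
  refine ⟨Pstar, hPge, by rw [hζP, ← hPeq, hcdef], huniq, hpoly, hsup, ?_⟩
  rw [hsup]; ring
end

section
/- Fix θ > 0, α > 2, μ_ε > 0 and λ_0 > 0. For λ_e > 0 let V(λ_e) = sup{min(1, λ_e/P) : P ≥ θ, λ_0·min(1, λ_e/P) ≤ ζ(P)}. Then lim_{λ_e → ∞} λ_0·V(λ_e) = min(λ_0, μ_ε·θ^{−2/α}); equivalently, the maximum network throughput satisfies lim_{λ_e → ∞} R*(λ_e) = min(λ_0, μ_ε·θ^{−2/α})·log_2(1 + θ). -/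
open Real Filter

/-- **High energy-arrival-rate limit of the maximum network throughput.** With
network interference temperature `ζ(P) = μ_ε (1/θ - 1/P)^(2/α)` and optimal
transmission probability
`V(λe) = sup {min 1 (λe/P) : P ≥ θ, λ0 · min 1 (λe/P) ≤ ζ(P)}`, one has
`λ0 V(λe) → min(λ0, μ_ε θ^(-2/α))` as `λe → ∞`; equivalently the maximum network
throughput satisfies `R*(λe) → min(λ0, μ_ε θ^(-2/α)) log₂(1+θ)`. -/
theorem max_throughput_high_energy_limit
    (θ α muEps lam0 : ℝ)
    (hθ : 0 < θ) (hα : 2 < α) (hmu : 0 < muEps) (hlam0 : 0 < lam0)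
    (ζ : ℝ → ℝ)
    (hζ : ∀ P : ℝ, θ ≤ P → ζ P = muEps * (1 / θ - 1 / P) ^ (2 / α))
    (V : ℝ → ℝ)
    (hV : ∀ lamE : ℝ, 0 < lamE →
      V lamE = sSup {v : ℝ | ∃ P : ℝ, θ ≤ P ∧ lam0 * min 1 (lamE / P) ≤ ζ P
        ∧ v = min 1 (lamE / P)}) :
    Filter.Tendsto (fun lamE => lam0 * V lamE) Filter.atTop
        (nhds (min lam0 (muEps * θ ^ (-(2 / α))))) ∧
    Filter.Tendsto (fun lamE => lam0 * Real.logb 2 (1 + θ) * V lamE) Filter.atTop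
        (nhds (min lam0 (muEps * θ ^ (-(2 / α))) * Real.logb 2 (1 + θ))) := by
  have hα0 : (0:ℝ) < α := by linarith
  have h2α : (0:ℝ) < 2 / α := by positivity
  set M : ℝ := muEps * θ ^ (-(2 / α)) with hMdef
  have hMeq : M = muEps * (1 / θ) ^ (2 / α) := by
    rw [hMdef, one_div, Real.inv_rpow hθ.le, ← Real.rpow_neg hθ.le]
  have hM0 : 0 < M := by
    rw [hMeq]; positivity
  set L : ℝ := min lam0 M with hLdef
  have hL0 : 0 < L := lt_min hlam0 hM0
  have hLlam : L ≤ lam0 := min_le_left _ _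
  have hLM : L ≤ M := min_le_right _ _
  -- Upper bound
  have hub : ∀ lamE : ℝ, 0 < lamE → lam0 * V lamE ≤ L := by
    intro lamE hpos
    rw [hV lamE hpos]
    rw [mul_comm, ← le_div_iff₀ hlam0]
    apply Real.sSup_le
    · rintro x ⟨P, hPθ, hadm, rfl⟩
      have hP0 : 0 < P := lt_of_lt_of_le hθ hPθ
      have hζle : ζ P ≤ M := by
        rw [hζ P hPθ, hMeq]
        apply mul_le_mul_of_nonneg_left _ hmu.le
        apply Real.rpow_le_rpow _ _ h2α.le
        · have : 1 / P ≤ 1 / θ := one_div_le_one_div_of_le hθ hPθ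
          linarith
        · have : 0 ≤ 1 / P := by positivity
          linarith
      rw [le_div_iff₀ hlam0]
      apply le_min
      · calc min 1 (lamE / P) * lam0 ≤ 1 * lam0 := by
              apply mul_le_mul_of_nonneg_right (min_le_left _ _) hlam0.le
          _ = lam0 := one_mul _
      · calc min 1 (lamE / P) * lam0 = lam0 * min 1 (lamE / P) := mul_comm _ _
          _ ≤ ζ P := hadm
          _ ≤ M := hζle
    · positivity
  -- Main limit
  have hmain : Filter.Tendsto (fun lamE => lam0 * V lamE) Filter.atTop (nhds L) := by
    rw [Metric.tendsto_nhds]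
    intro ε hε
    set δ : ℝ := min (ε / (2 * lam0)) (L / (2 * lam0)) with hδdef
    have hδ0 : 0 < δ := lt_min (by positivity) (by positivity)
    set v : ℝ := L / lam0 - δ with hvdef
    have hv0 : 0 < v := by
      have : δ ≤ L / (2 * lam0) := min_le_right _ _
      have h1 : L / (2 * lam0) < L / lam0 := by
        apply div_lt_div_of_pos_left hL0 hlam0; linarith
      simp only [hvdef]; linarith
    have hv1 : v ≤ 1 := by
      have : L / lam0 ≤ 1 := (div_le_one hlam0).mpr hLlam
      simp only [hvdef]; linarith
    have hlvL : lam0 * v < L := by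
      have : lam0 * v = L - lam0 * δ := by
        simp only [hvdef]; field_simp
      rw [this]
      have : 0 < lam0 * δ := mul_pos hlam0 hδ0
      linarith
    have hlvM : lam0 * v < M := lt_of_lt_of_le hlvL hLM
    -- ζ at P = lamE / v tends to M
    have hg : Filter.Tendsto (fun lamE => muEps * (1 / θ - v / lamE) ^ (2 / α))
        Filter.atTop (nhds M) := by
      have h1 : Filter.Tendsto (fun lamE : ℝ => v / lamE) Filter.atTop (nhds 0) :=
        tendsto_const_nhds.div_atTop tendsto_id
      have h2 : Filter.Tendsto (fun lamE : ℝ => 1 / θ - v / lamE) Filter.atTop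
          (nhds (1 / θ)) := by
        simpa using tendsto_const_nhds.sub h1
      have h3 := h2.rpow_const (Or.inr h2α.le)
      rw [hMeq]
      exact h3.const_mul muEps
    have hev1 : ∀ᶠ lamE in Filter.atTop,
        lam0 * v < muEps * (1 / θ - v / lamE) ^ (2 / α) :=
      hg.eventually (eventually_gt_nhds hlvM)
    have hev2 : ∀ᶠ lamE : ℝ in Filter.atTop, θ ≤ lamE := eventually_ge_atTop θ
    have hev3 : ∀ᶠ lamE : ℝ in Filter.atTop, (0:ℝ) < lamE := eventually_gt_atTop 0
    filter_upwards [hev1, hev2, hev3] with lamE h1 h2 h3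
    -- show v is admissible
    have hvne : v ≠ 0 := ne_of_gt hv0
    have hlamne : lamE ≠ 0 := ne_of_gt h3
    have hPθ : θ ≤ lamE / v := by
      rw [le_div_iff₀ hv0]
      calc θ * v ≤ θ * 1 := by nlinarith
        _ = θ := mul_one _
        _ ≤ lamE := h2
    have hPval : lamE / (lamE / v) = v := by field_simp
    have hmem : v ∈ {x : ℝ | ∃ P : ℝ, θ ≤ P ∧ lam0 * min 1 (lamE / P) ≤ ζ P
        ∧ x = min 1 (lamE / P)} := by
      refine ⟨lamE / v, hPθ, ?_, ?_⟩
      · rw [hPval, min_eq_right hv1, hζ _ hPθ, one_div_div]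
        exact le_of_lt h1
      · rw [hPval, min_eq_right hv1]
    have hbdd : BddAbove {x : ℝ | ∃ P : ℝ, θ ≤ P ∧ lam0 * min 1 (lamE / P) ≤ ζ P
        ∧ x = min 1 (lamE / P)} := by
      refine ⟨1, ?_⟩
      rintro x ⟨P, _, _, rfl⟩
      exact min_le_left _ _
    have hVlb : v ≤ V lamE := by
      rw [hV lamE h3]
      exact le_csSup hbdd hmem
    have hlow : L - ε / 2 ≤ lam0 * V lamE := by
      have hδε : δ ≤ ε / (2 * lam0) := min_le_left _ _
      have h4 : lam0 * δ ≤ ε / 2 := by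
        rw [← le_div_iff₀' hlam0] at *
        calc δ ≤ ε / (2 * lam0) := hδε
          _ = ε / 2 / lam0 := by ring
      have h5 : lam0 * v ≤ lam0 * V lamE := mul_le_mul_of_nonneg_left hVlb hlam0.le
      have h6 : lam0 * v = L - lam0 * δ := by
        simp only [hvdef]; field_simp
      linarith
    have hup := hub lamE h3
    rw [Real.dist_eq, abs_lt]
    constructor <;> linarith
  refine ⟨hmain, ?_⟩
  have := hmain.const_mul (Real.logb 2 (1 + θ))
  convert this using 2 with lamE
  · ring
  · rw [mul_comm]
end

section
/- Fix θ > 0, α > 2, μ_ε > 0 and λ_e > 0. For λ_0 > 0 let V(λ_0) = sup{min(1, λ_e/P) : P ≥ θ, λ_0·min(1, λ_e/P) ≤ ζ(P)}. Then lim_{λ_0 → ∞} λ_0·V(λ_0) = μ_ε·θ^{−2/α}; equivalently, the maximum network throughput satisfies lim_{λ_0 → ∞} R*(λ_0) = μ_ε·θ^{−2/α}·log_2(1 + θ). -/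
open Real Filter

/-- **Dense-network limit of the maximum network throughput.** With network
interference temperature `ζ(P) = μ_ε (1/θ - 1/P)^(2/α)` and optimal transmission
probability `V(λ0) = sup {min 1 (λe/P) : P ≥ θ, λ0 · min 1 (λe/P) ≤ ζ(P)}`, one
has `λ0 V(λ0) → μ_ε θ^(-2/α)` as `λ0 → ∞`; equivalently the maximum network
throughput satisfies `R*(λ0) → μ_ε θ^(-2/α) log₂(1+θ)`. -/
theorem max_throughput_dense_network_limit
    (θ α muEps lamE : ℝ)
    (hθ : 0 < θ) (hα : 2 < α) (hmu : 0 < muEps) (hlamE : 0 < lamE)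
    (ζ : ℝ → ℝ)
    (hζ : ∀ P : ℝ, θ ≤ P → ζ P = muEps * (1 / θ - 1 / P) ^ (2 / α))
    (V : ℝ → ℝ)
    (hV : ∀ lam0 : ℝ, 0 < lam0 →
      V lam0 = sSup {v : ℝ | ∃ P : ℝ, θ ≤ P ∧ lam0 * min 1 (lamE / P) ≤ ζ P
        ∧ v = min 1 (lamE / P)}) :
    Filter.Tendsto (fun lam0 => lam0 * V lam0) Filter.atTop
        (nhds (muEps * θ ^ (-(2 / α)))) ∧
    Filter.Tendsto (fun lam0 => lam0 * Real.logb 2 (1 + θ) * V lam0) Filter.atTop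
        (nhds (muEps * θ ^ (-(2 / α)) * Real.logb 2 (1 + θ))) := by
  set C : ℝ := muEps * θ ^ (-(2 / α)) with hCdef
  have hθ' : (0:ℝ) < 1/θ := by positivity
  have hexp : (0:ℝ) ≤ 2/α := by positivity
  have hCeq : C = muEps * (1/θ) ^ (2/α) := by
    rw [hCdef, one_div, Real.inv_rpow hθ.le, ← Real.rpow_neg hθ.le]
  have hCpos : 0 < C := by
    rw [hCeq]
    have : (0:ℝ) < (1/θ) ^ (2/α) := Real.rpow_pos_of_pos hθ' _
    positivity
  -- ζ P ≤ C for all admissible P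
  have hζle : ∀ P, θ ≤ P → ζ P ≤ C := by
    intro P hP
    have hP0 : 0 < P := lt_of_lt_of_le hθ hP
    rw [hζ P hP, hCeq]
    apply mul_le_mul_of_nonneg_left _ hmu.le
    apply Real.rpow_le_rpow
    · have h1 : 1/P ≤ 1/θ := one_div_le_one_div_of_le hθ hP
      linarith
    · have h2 : 0 < 1/P := by positivity
      linarith
    · exact hexp
  -- ζ tends to C at infinity (via the explicit formula)
  have hg : Tendsto (fun P : ℝ => muEps * (1/θ - 1/P) ^ (2/α)) atTop (nhds C) := by
    have h1 : Tendsto (fun P : ℝ => 1/θ - 1/P) atTop (nhds (1/θ)) := by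
      simpa [one_div] using (tendsto_const_nhds (α := ℝ) (x := 1/θ)).sub
        tendsto_inv_atTop_zero
    have h2 : ContinuousAt (fun x : ℝ => x ^ (2/α)) (1/θ) :=
      Real.continuousAt_rpow_const _ _ (Or.inl (ne_of_gt hθ'))
    have h3 : Tendsto (fun P : ℝ => (1/θ - 1/P) ^ (2/α)) atTop
        (nhds ((1/θ) ^ (2/α))) := h2.tendsto.comp h1
    have := h3.const_mul muEps
    rwa [← hCeq] at this
  -- The feasible set and its properties
  have hbdd : ∀ lam0 : ℝ,
      BddAbove {v : ℝ | ∃ P : ℝ, θ ≤ P ∧ lam0 * min 1 (lamE / P) ≤ ζ P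
        ∧ v = min 1 (lamE / P)} := by
    intro lam0
    refine ⟨1, ?_⟩
    rintro v ⟨P, _, _, rfl⟩
    exact min_le_left _ _
  -- Upper bound: lam0 * V lam0 ≤ C
  have hupper : ∀ lam0 : ℝ, 0 < lam0 → lam0 * V lam0 ≤ C := by
    intro lam0 hlam0
    rw [hV lam0 hlam0]
    have hs : sSup {v : ℝ | ∃ P : ℝ, θ ≤ P ∧ lam0 * min 1 (lamE / P) ≤ ζ P
        ∧ v = min 1 (lamE / P)} ≤ C / lam0 := by
      apply Real.sSup_le
      · rintro v ⟨P, hP, hcon, rfl⟩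
        rw [le_div_iff₀ hlam0, mul_comm]
        exact hcon.trans (hζle P hP)
      · positivity
    calc lam0 * sSup _ ≤ lam0 * (C / lam0) :=
          mul_le_mul_of_nonneg_left hs hlam0.le
      _ = C := by field_simp
  -- main limit
  have hmain : Tendsto (fun lam0 => lam0 * V lam0) atTop (nhds C) := by
    rw [Metric.tendsto_atTop]
    intro ε hε
    set ε' : ℝ := min (ε/2) (C/2) with hε'def
    have hε'pos : 0 < ε' := lt_min (by linarith) (by linarith)
    have hε'le : ε' ≤ ε/2 := min_le_left _ _
    have hCε' : 0 < C - ε' := by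
      have : ε' ≤ C/2 := min_le_right _ _
      linarith
    -- get P0 with ζ P ≥ C - ε' for P ≥ P0 (and P ≥ θ)
    obtain ⟨P0, hP0⟩ := (eventually_atTop.mp
      (hg.eventually (eventually_ge_nhds (show C - ε' < C by linarith))))
    set K : ℝ := lamE / (C - ε') with hKdef
    have hKpos : 0 < K := by positivity
    refine ⟨max (max (θ/K) (P0/K)) (max C 1), ?_⟩
    intro lam0 hlam0
    have h1lam : (1:ℝ) ≤ lam0 :=
      le_trans (le_trans (le_max_right C 1) (le_max_right _ _)) hlam0
    have hlam0pos : 0 < lam0 := lt_of_lt_of_le one_pos h1lam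
    have hlamC : C ≤ lam0 :=
      le_trans (le_trans (le_max_left C 1) (le_max_right _ _)) hlam0
    set P : ℝ := lam0 * K with hPdef
    have hPθ : θ ≤ P := by
      have h : θ/K ≤ lam0 :=
        le_trans (le_trans (le_max_left _ _) (le_max_left _ _)) hlam0
      rw [div_le_iff₀ hKpos] at h
      linarith [h]
    have hPP0 : P0 ≤ P := by
      have h : P0/K ≤ lam0 :=
        le_trans (le_trans (le_max_right _ _) (le_max_left _ _)) hlam0
      rw [div_le_iff₀ hKpos] at h
      linarith [h]
    have hζP : C - ε' ≤ ζ P := by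
      rw [hζ P hPθ]
      exact hP0 P hPP0
    have hfrac : lamE / P = (C - ε') / lam0 := by
      rw [hPdef, hKdef]
      field_simp
    have hle1 : lamE / P ≤ 1 := by
      rw [hfrac, div_le_one hlam0pos]
      linarith
    have hminEq : min 1 (lamE / P) = (C - ε') / lam0 := by
      rw [min_eq_right hle1, hfrac]
    have hmem : (C - ε') / lam0 ∈ {v : ℝ | ∃ Q : ℝ, θ ≤ Q ∧
        lam0 * min 1 (lamE / Q) ≤ ζ Q ∧ v = min 1 (lamE / Q)} := by
      refine ⟨P, hPθ, ?_, hminEq.symm⟩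
      rw [hminEq, mul_div_cancel₀ _ (ne_of_gt hlam0pos)]
      exact hζP
    have hVlb : (C - ε') / lam0 ≤ V lam0 := by
      rw [hV lam0 hlam0pos]
      exact le_csSup (hbdd lam0) hmem
    have hlow : C - ε' ≤ lam0 * V lam0 := by
      have := mul_le_mul_of_nonneg_left hVlb hlam0pos.le
      rwa [mul_div_cancel₀ _ (ne_of_gt hlam0pos)] at this
    have hup := hupper lam0 hlam0pos
    rw [Real.dist_eq, abs_lt]
    constructor <;> linarith
  refine ⟨hmain, ?_⟩
  have heq : (fun lam0 => lam0 * Real.logb 2 (1 + θ) * V lam0)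
      = fun lam0 => (lam0 * V lam0) * Real.logb 2 (1 + θ) := by
    funext lam0; ring
  rw [heq]
  exact hmain.mul_const _
end
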